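/- arXiv:2012.04531 — 5 statements merged into one kernel-verified Lean document; each statement's English description precedes it below -/
import Mathlib

section
/- For integers 0 <= d <= n and any y in R^n, all zeros of the polynomial t -> e_d(t - y_1, ..., t - y_n) are real. -/
/-!
With `P = ∏ i, (X - C (y i))`, Taylor expansion at `z` gives
`P (z + X) = ∏ i, (X + (z - y i))`, whose coefficient of `X ^ (n - d)` is `e_d(z - y)`;
hence `t ↦ e_d(t - y)` is the Hasse derivative `hasseDeriv (n - d) P`, a nonzero multiple of
the `(n - d)`-th derivative of `P`. By Rolle's theorem, differentiation preserves the property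
of a real polynomial of having all its roots real.
-/

open Polynomial
open scoped Nat

namespace Polynomial

theorem map_hasseDeriv {R S : Type*} [Semiring R] [Semiring S] (f : R →+* S) (k : ℕ) (p : R[X]) :
    (hasseDeriv k p).map f = hasseDeriv k (p.map f) := by
  ext m
  simp [hasseDeriv_coeff, coeff_map]

theorem hasseDeriv_ne_zero {R : Type*} [Semiring R] [NoZeroDivisors R] [CharZero R] {p : R[X]}
    (hp : p ≠ 0) {k : ℕ} (hk : k ≤ p.natDegree) : hasseDeriv k p ≠ 0 := by
  intro h
  have := congr_arg (coeff · (p.natDegree - k)) h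
  simp only [hasseDeriv_coeff, Nat.sub_add_cancel hk, coeff_zero] at this
  exact mul_ne_zero (by exact_mod_cast (Nat.choose_pos hk).ne') (leadingCoeff_ne_zero.mpr hp) this

theorem splits_derivative {p : ℝ[X]} (hp : p.Splits) : p.derivative.Splits := by
  rw [splits_iff_card_roots] at hp ⊢
  have hroots := card_roots_le_derivative p
  have hdeg := natDegree_derivative_le p
  exact le_antisymm (card_roots' _) (by omega)

theorem splits_iterate_derivative {p : ℝ[X]} (hp : p.Splits) (k : ℕ) :
    (derivative^[k] p).Splits := by
  induction k with
  | zero => exact hp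
  | succ k ih => rw [Function.iterate_succ_apply']; exact splits_derivative ih

theorem splits_hasseDeriv {p : ℝ[X]} (hp : p.Splits) (k : ℕ) : (hasseDeriv k p).Splits := by
  have h : hasseDeriv k p = C (k ! : ℝ)⁻¹ * derivative^[k] p := by
    rw [← factorial_smul_hasseDeriv, LinearMap.smul_apply, nsmul_eq_mul, ← C_eq_natCast,
      ← mul_assoc, ← C_mul, inv_mul_cancel₀ (by positivity), C_1, one_mul]
  rw [h]
  exact (splits_iterate_derivative hp k).C_mul _

theorem taylor_prod_X_sub_C {R ι : Type*} [CommRing R] (s : Finset ι) (y : ι → R) (z : R) :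
    taylor z (∏ i ∈ s, (X - C (y i))) = ∏ i ∈ s, (X + C (z - y i)) := by
  rw [← taylorAlgHom_apply, map_prod]
  refine Finset.prod_congr rfl fun i _ => ?_
  rw [map_sub, taylorAlgHom_apply, taylorAlgHom_apply, taylor_X, taylor_C, C_sub]
  ring

theorem eval_hasseDeriv_prod_X_sub_C {R σ : Type*} [CommRing R] [Fintype σ]
    (y : σ → R) (z : R) {d : ℕ} (hd : d ≤ Fintype.card σ) :
    (hasseDeriv (Fintype.card σ - d) (∏ i, (X - C (y i)))).eval z =
      MvPolynomial.eval (fun i => z - y i) (MvPolynomial.esymm σ R d) := by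
  rw [← taylor_coeff, taylor_prod_X_sub_C, Finset.prod_X_add_C_coeff _ _ (by simp),
    Finset.card_univ, Nat.sub_sub_self hd]
  simp [MvPolynomial.esymm, map_sum, map_prod]

end Polynomial

/-- For `0 ≤ d ≤ n` and `y ∈ ℝⁿ`, all (complex) zeros of the polynomial
`t ↦ e_d(t - y₁, …, t - y_n)` are real. -/
theorem esymm_shift_real_rooted (n d : ℕ) (hd : d ≤ n) (y : Fin n → ℝ) (z : ℂ)
    (hz : MvPolynomial.eval (fun i => z - (y i : ℂ)) (MvPolynomial.esymm (Fin n) ℂ d) = 0) :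
    z.im = 0 := by
  set P : ℝ[X] := ∏ i, (X - C (y i))
  have hP : P.Monic := monic_prod_of_monic _ _ fun i _ => monic_X_sub_C (y i)
  have hPdeg : P.natDegree = n := by simp [P]
  set Q := hasseDeriv (n - d) P
  have hQ : Q.Splits := splits_hasseDeriv (Splits.prod fun i _ => Splits.X_sub_C (y i)) _
  have hQ0 : Q ≠ 0 := hasseDeriv_ne_zero hP.ne_zero (by omega)
  have hroot : (Q.map (algebraMap ℝ ℂ)).IsRoot z := by
    have := eval_hasseDeriv_prod_X_sub_C (fun i => (y i : ℂ)) z (d := d) (by simpa using hd)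
    rw [Fintype.card_fin, hz] at this
    simpa [Q, P, map_hasseDeriv, Polynomial.map_prod] using this
  obtain ⟨x, rfl⟩ := hQ.mem_range_of_isRoot hQ0 hroot
  simp
end

section
/- Let 0 <= d <= n and let y in R^n be such that no value occurs among the coordinates y_1,...,y_n more than n - d + 1 times. Then all zeros of the polynomial t -> e_d(t - y_1, ..., t - y_n) are real and pairwise distinct. -/
open Polynomial Finset
open scoped Nat

/-!
Differentiating `∑_{|T| = k+1} ∏_{i ∈ T} (X - y i)` gives `n - k` times the same sum over
`|T| = k`, so `e_d(X - y)` is a nonzero multiple of `P^{(n-d)}`, where `P = ∏ i, (X - y i)`.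
Over `ℝ`, Rolle's theorem shows that the derivative of a polynomial with only real roots again
has only real roots: an `m`-fold root of `p` is an `(m-1)`-fold root of `p'`, and all other roots
of `p'` are simple. So each differentiation lowers every multiplicity above `1` by one, and `n - d`
differentiations of `P`, whose roots have multiplicity at most `n - d + 1`, leave only simple
real roots.
-/

namespace Polynomial

section Combinatorics

variable {R ι : Type*} [CommRing R]

theorem derivative_sum_powersetCard_prod_X_sub_C (s : Finset ι) (f : ι → R) (k : ℕ) :
    derivative (∑ T ∈ s.powersetCard (k + 1), ∏ i ∈ T, (X - C (f i))) =
      (#s - k : ℕ) * ∑ T ∈ s.powersetCard k, ∏ i ∈ T, (X - C (f i)) := by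
  classical
  calc derivative (∑ T ∈ s.powersetCard (k + 1), ∏ i ∈ T, (X - C (f i)))
      = ∑ T ∈ s.powersetCard (k + 1), ∑ i ∈ T, ∏ j ∈ T.erase i, (X - C (f j)) := by
        simp_rw [derivative_sum, derivative_prod_finset, derivative_X_sub_C, mul_one]
    _ = ∑ (T ∈ s.powersetCard (k + 1)) (i ∈ s) with i ∈ T, ∏ j ∈ T.erase i, (X - C (f j)) := by
        rw [← sum_finset_product']
        grind
    _ = ∑ (T ∈ s.powersetCard k) (i ∈ s) with i ∉ T, ∏ j ∈ T, (X - C (f j)) := by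
        apply sum_bij' (fun ⟨T, i⟩ _ => ⟨T.erase i, i⟩) (fun ⟨T, i⟩ _ => ⟨insert i T, i⟩)
        · intro r hr; dsimp at hr ⊢; congr 1; grind
        · intro r hr; dsimp at hr ⊢; congr 1; grind
        all_goals grind
    _ = ∑ T ∈ s.powersetCard k, ∑ i ∈ s \ T, ∏ j ∈ T, (X - C (f j)) := by
        rw [← sum_finset_product']
        grind
    _ = (#s - k : ℕ) * ∑ T ∈ s.powersetCard k, ∏ i ∈ T, (X - C (f i)) := by
        rw [mul_sum]
        congr! 1 with T hT
        simp [sum_const, show #(s \ T) = #s - k by grind]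

theorem iterate_derivative_prod_X_sub_C_eq_sum_powersetCard (s : Finset ι) (f : ι → R) {k : ℕ}
    (hk : k ≤ #s) :
    derivative^[k] (∏ i ∈ s, (X - C (f i))) =
      k ! * ∑ T ∈ s.powersetCard (#s - k), ∏ i ∈ T, (X - C (f i)) := by
  induction k with
  | zero => simp
  | succ k ih =>
    rw [Function.iterate_succ_apply', ih (by omega), derivative_natCast_mul,
      show #s - k = #s - (k + 1) + 1 by omega, derivative_sum_powersetCard_prod_X_sub_C,
      show #s - (#s - (k + 1)) = k + 1 by omega, Nat.factorial_succ]
    push_cast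
    ring

end Combinatorics

section RealRoots

variable {p : ℝ[X]}

theorem Splits.derivative_of_real (hp : p.Splits) : p.derivative.Splits := by
  rw [splits_iff_card_roots] at hp ⊢
  have := card_roots_le_derivative p
  have := natDegree_derivative_le p
  have := card_roots' p.derivative
  omega

/-- Rolle's theorem produces `#(distinct roots of p) - 1` roots of `p'` between those of `p`, while
the roots of `p` themselves already carry `deg p - #(distinct roots of p)` roots of `p'`; as
`deg p' = deg p - 1`, the Rolle roots must be simple. -/
theorem Splits.nodup_filter_roots_derivative_notMem_roots (hp : p.Splits) :
    (p.derivative.roots.filter (· ∉ p.roots)).Nodup := by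
  have hrolle := card_roots_toFinset_le_card_roots_derivative_sdiff_roots_succ p
  set R := p.roots
  set R' := p.derivative.roots
  have hR : Multiset.card R = p.natDegree := splits_iff_card_roots.1 hp
  have hR' : Multiset.card R' ≤ p.natDegree - 1 :=
    (card_roots' _).trans (natDegree_derivative_le p)
  have hmult : R - R.dedup ≤ R'.filter (· ∈ R) := by
    refine Multiset.le_filter.2 ⟨Multiset.le_iff_count.2 fun a => ?_,
      fun a ha => Multiset.mem_of_le (Multiset.sub_le_self _ _) ha⟩
    rw [Multiset.count_sub, Multiset.count_dedup]
    split_ifs with ha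
    · rw [count_roots, count_roots]
      exact rootMultiplicity_sub_one_le_derivative_rootMultiplicity p a
    · simp [Multiset.count_eq_zero.2 ha]
  have hD : R'.toFinset \ R.toFinset = (R'.filter (· ∉ R)).toFinset := by
    ext; simp
  rw [hD, Multiset.card_toFinset, Multiset.card_toFinset] at hrolle
  have hsplit := congrArg Multiset.card (Multiset.filter_add_not (· ∈ R) R')
  have hdedup := congrArg Multiset.card (tsub_add_cancel_of_le (Multiset.dedup_le R))
  rw [Multiset.card_add] at hsplit hdedup
  have := Multiset.card_le_card hmult
  refine Multiset.dedup_eq_self.1 (Multiset.eq_of_le_of_card_le (Multiset.dedup_le _) ?_)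
  omega

theorem Splits.count_roots_derivative_le (hp : p.Splits) (a : ℝ) :
    p.derivative.roots.count a ≤ max (p.roots.count a - 1) 1 := by
  by_cases ha : a ∈ p.roots
  · rw [count_roots, count_roots, derivative_rootMultiplicity_of_root (mem_roots'.1 ha).2]
    exact le_max_left _ _
  · rw [← Multiset.count_filter_of_pos (p := (· ∉ p.roots)) ha]
    exact (Multiset.nodup_iff_count_le_one.1 hp.nodup_filter_roots_derivative_notMem_roots a).trans
      (le_max_right _ _)

theorem Splits.iterate_derivative_of_real (hp : p.Splits) (k : ℕ) :
    (derivative^[k] p).Splits := by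
  induction k with
  | zero => exact hp
  | succ k ih =>
    rw [Function.iterate_succ_apply']
    exact ih.derivative_of_real

theorem Splits.nodup_roots_iterate_derivative {k : ℕ} (hp : p.Splits)
    (hmult : ∀ a, p.roots.count a ≤ k + 1) : (derivative^[k] p).roots.Nodup := by
  induction k generalizing p with
  | zero => exact Multiset.nodup_iff_count_le_one.2 hmult
  | succ k ih =>
    refine ih hp.derivative_of_real fun a => (hp.count_roots_derivative_le a).trans ?_
    have := hmult a
    omega

end RealRoots

theorem iterate_derivative_ne_zero {R : Type*} [CommRing R] [IsDomain R] [CharZero R] {p : R[X]}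
    (hp : p ≠ 0) {k : ℕ} (hk : k ≤ p.natDegree) : derivative^[k] p ≠ 0 := by
  intro h
  have := congrArg (coeff · (p.natDegree - k)) h
  simp only [coeff_iterate_derivative, Nat.sub_add_cancel hk, coeff_zero] at this
  rw [nsmul_eq_mul] at this
  exact mul_ne_zero (Nat.cast_ne_zero.2 (Nat.descFactorial_pos.2 hk).ne')
    (leadingCoeff_ne_zero.2 hp) this

theorem roots_prod_X_sub_C_eq_map {R ι : Type*} [CommRing R] [IsDomain R] (s : Finset ι)
    (f : ι → R) : (∏ i ∈ s, (X - C (f i))).roots = s.val.map f := by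
  rw [← roots_multiset_prod_X_sub_C (s.val.map f), Multiset.map_map]
  rfl

end Polynomial

/-- Let `0 ≤ d ≤ n` and let `y ∈ ℝⁿ` be such that no value occurs among the coordinates
`y₁, …, y_n` more than `n - d + 1` times. Then all zeros of the polynomial
`t ↦ e_d(t - y₁, …, t - y_n)` are real and pairwise distinct (the polynomial is squarefree
with only real complex roots). -/
theorem esymm_shift_real_distinct_roots (n d : ℕ) (hd : d ≤ n) (y : Fin n → ℝ)
    (hy : ∀ a : ℝ, (Finset.univ.filter fun i => y i = a).card ≤ n - d + 1) :
    (∀ z : ℂ,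
        ((∑ S ∈ Finset.univ.powersetCard d,
            ∏ i ∈ S, (Polynomial.X - Polynomial.C (y i))).map (algebraMap ℝ ℂ)).IsRoot z →
          z.im = 0) ∧
    Squarefree (∑ S ∈ Finset.univ.powersetCard d,
        ∏ i ∈ S, (Polynomial.X - Polynomial.C (y i))) := by
  set Q := ∑ S ∈ univ.powersetCard d, ∏ i ∈ S, (X - C (y i))
  set P := ∏ i, (X - C (y i))
  have hPQ : derivative^[n - d] P = ((n - d)! : ℝ[X]) * Q := by
    simpa [Nat.sub_sub_self hd] using
      iterate_derivative_prod_X_sub_C_eq_sum_powersetCard univ y (k := n - d) (by simp)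
  have hP : P.Splits := Splits.prod fun i _ => Splits.X_sub_C (y i)
  have hmult : ∀ a, P.roots.count a ≤ n - d + 1 := fun a => by
    rw [roots_prod_X_sub_C_eq_map, Multiset.count_map]
    simp_rw [@eq_comm _ a]
    exact hy a
  have hsplits := hP.iterate_derivative_of_real (n - d)
  have hnodup := hP.nodup_roots_iterate_derivative hmult
  have hG0 : derivative^[n - d] P ≠ 0 :=
    iterate_derivative_ne_zero (monic_prod_of_monic _ _ fun i _ => monic_X_sub_C (y i)).ne_zero
      (by simp)
  have hdvd : Q ∣ derivative^[n - d] P := hPQ ▸ dvd_mul_left _ _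
  have hQ0 : Q ≠ 0 := ne_zero_of_dvd_ne_zero hG0 hdvd
  have hsep : Q.Separable := ((nodup_roots_iff_of_splits hG0 hsplits).1 hnodup).of_dvd hdvd
  refine ⟨fun z hz => ?_, hsep.squarefree⟩
  obtain ⟨a, rfl⟩ := (hsplits.of_dvd hG0 hdvd).mem_range_of_isRoot hQ0 hz
  exact Complex.ofReal_im a
end

section
/- Let C be a closed subset of a finite-dimensional real vector space V, and let L_1, L_2 be linear operators on V such that e^{s L_i} maps C into C for all s >= 0 and i = 1,2. Then e^{s(L_1 + L_2)} maps C into C for all s >= 0. -/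
/-!
Lie–Trotter: `t ↦ exp (t • x) * exp (t • y)` and `t ↦ exp (t • (x + y))` have the same derivative
at `0`, so the `n`-th step operators `exp (x / n) * exp (y / n)` and `exp ((x + y) / n)` differ by
`o(1 / n)`. Telescoping their `n`-th powers, whose norms stay below `e ^ (‖x‖ + ‖y‖)`, the error is
`n · o(1 / n) → 0`. Every power of the step operator maps `C` into `C`, and `C` is closed.
-/

open NormedSpace Filter Topology Asymptotics Set

theorem norm_pow_succ_sub_pow_succ_le {A : Type*} [NormedRing A] {u v : A} {K : ℝ}
    (hu : ‖u‖ ≤ K) (hv : ‖v‖ ≤ K) (n : ℕ) :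
    ‖u ^ (n + 1) - v ^ (n + 1)‖ ≤ (n + 1) * K ^ n * ‖u - v‖ := by
  have hK : 0 ≤ K := (norm_nonneg u).trans hu
  induction n with
  | zero => simp
  | succ n ih =>
    have hvn : ‖v ^ (n + 1)‖ ≤ K ^ (n + 1) :=
      (norm_pow_le' v n.succ_pos).trans (pow_le_pow_left₀ (norm_nonneg v) hv _)
    calc ‖u ^ (n + 2) - v ^ (n + 2)‖
        = ‖u * (u ^ (n + 1) - v ^ (n + 1)) + (u - v) * v ^ (n + 1)‖ := by
          rw [pow_succ' u, pow_succ' v (n + 1)]; noncomm_ring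
      _ ≤ ‖u‖ * ‖u ^ (n + 1) - v ^ (n + 1)‖ + ‖u - v‖ * ‖v ^ (n + 1)‖ :=
          (norm_add_le _ _).trans (add_le_add (norm_mul_le _ _) (norm_mul_le _ _))
      _ ≤ K * ((n + 1) * K ^ n * ‖u - v‖) + ‖u - v‖ * K ^ (n + 1) := by gcongr
      _ = (↑(n + 1) + 1) * K ^ (n + 1) * ‖u - v‖ := by push_cast; ring

theorem norm_exp_le_exp_norm {A : Type*} [NormedRing A] [NormOneClass A] [NormedAlgebra ℝ A]
    (x : A) : ‖exp x‖ ≤ Real.exp ‖x‖ := by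
  rw [exp_eq_tsum ℝ, Real.exp_eq_exp_ℝ, exp_eq_tsum_div]
  refine (norm_tsum_le_tsum_norm (norm_expSeries_summable' x)).trans ?_
  refine (norm_expSeries_summable' x).tsum_le_tsum (fun n => ?_)
    (Real.summable_pow_div_factorial ‖x‖)
  rw [norm_smul, norm_inv, Real.norm_natCast, div_eq_inv_mul]
  gcongr
  exact norm_pow_le x n

section
variable {A : Type*} [NormedRing A] [NormedAlgebra ℝ A] [CompleteSpace A]

theorem isLittleO_exp_smul_mul_exp_smul_sub_exp_smul_add (x y : A) :
    (fun t : ℝ => exp (t • x) * exp (t • y) - exp (t • (x + y))) =o[𝓝 0] fun t => t := by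
  have h := ((hasDerivAt_exp_smul_const x (0 : ℝ)).mul (hasDerivAt_exp_smul_const y 0)).sub
    (hasDerivAt_exp_smul_const (x + y) 0)
  simp only [zero_smul, exp_zero, one_mul, mul_one, sub_self] at h
  simpa using h.isLittleO

theorem tendsto_succ_mul_norm_exp_mul_exp_sub_exp (x y : A) :
    Tendsto (fun n : ℕ => (n + 1 : ℝ) *
      ‖exp ((n + 1 : ℝ)⁻¹ • x) * exp ((n + 1 : ℝ)⁻¹ • y) - exp ((n + 1 : ℝ)⁻¹ • (x + y))‖)
      atTop (𝓝 0) := by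
  have hinv : Tendsto (fun n : ℕ => (n + 1 : ℝ)⁻¹) atTop (𝓝 0) := by
    simpa using tendsto_one_div_add_atTop_nhds_zero_nat (𝕜 := ℝ)
  have h := ((isLittleO_exp_smul_mul_exp_smul_sub_exp_smul_add x y).comp_tendsto
    hinv).norm_left.tendsto_div_nhds_zero
  simpa only [Function.comp_def, div_inv_eq_mul, mul_comm] using h

variable [NormOneClass A]

theorem norm_exp_mul_exp_pow_sub_exp_add_le (x y : A) (n : ℕ) :
    ‖(exp ((n + 1 : ℝ)⁻¹ • x) * exp ((n + 1 : ℝ)⁻¹ • y)) ^ (n + 1) - exp (x + y)‖ ≤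
      Real.exp (‖x‖ + ‖y‖) * ((n + 1 : ℝ) *
        ‖exp ((n + 1 : ℝ)⁻¹ • x) * exp ((n + 1 : ℝ)⁻¹ • y) - exp ((n + 1 : ℝ)⁻¹ • (x + y))‖) := by
  -- `exp_nsmul` is stated for `ℚ`-algebras.
  let : NormedAlgebra ℚ A := NormedAlgebra.restrictScalars ℚ ℝ A
  set t : ℝ := (n + 1 : ℝ)⁻¹
  have ht : 0 ≤ t := by positivity
  have hnt : (n + 1 : ℝ) * t = 1 := mul_inv_cancel₀ (by positivity)
  set K := Real.exp (t * (‖x‖ + ‖y‖))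
  have hu : ‖exp (t • x) * exp (t • y)‖ ≤ K := calc
    _ ≤ ‖exp (t • x)‖ * ‖exp (t • y)‖ := norm_mul_le _ _
    _ ≤ Real.exp ‖t • x‖ * Real.exp ‖t • y‖ := by
        gcongr <;> exact norm_exp_le_exp_norm _
    _ = K := by rw [← Real.exp_add, norm_smul, norm_smul, Real.norm_of_nonneg ht, ← mul_add]
  have hv : ‖exp (t • (x + y))‖ ≤ K := by
    refine (norm_exp_le_exp_norm _).trans (Real.exp_le_exp.2 ?_)
    rw [norm_smul, Real.norm_of_nonneg ht]
    gcongr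
    exact norm_add_le x y
  have hv_pow : exp (t • (x + y)) ^ (n + 1) = exp (x + y) := by
    rw [← exp_nsmul, ← Nat.cast_smul_eq_nsmul ℝ, smul_smul]
    push_cast
    rw [hnt, one_smul]
  have hK : K ^ n ≤ Real.exp (‖x‖ + ‖y‖) := by
    rw [← Real.exp_nat_mul, Real.exp_le_exp, ← mul_assoc]
    refine mul_le_of_le_one_left (by positivity) ?_
    nlinarith
  calc _ = ‖(exp (t • x) * exp (t • y)) ^ (n + 1) - exp (t • (x + y)) ^ (n + 1)‖ := by
        rw [hv_pow]
    _ ≤ (n + 1) * K ^ n * ‖exp (t • x) * exp (t • y) - exp (t • (x + y))‖ :=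
        norm_pow_succ_sub_pow_succ_le hu hv n
    _ ≤ _ := by
        rw [mul_comm _ (K ^ n), mul_assoc]
        gcongr

theorem tendsto_exp_mul_exp_pow (x y : A) :
    Tendsto (fun n : ℕ => (exp ((n : ℝ)⁻¹ • x) * exp ((n : ℝ)⁻¹ • y)) ^ n) atTop
      (𝓝 (exp (x + y))) := by
  rw [← tendsto_add_atTop_iff_nat 1, tendsto_iff_norm_sub_tendsto_zero]
  refine squeeze_zero (fun _ => norm_nonneg _) (fun n => ?_)
    (by simpa only [mul_zero] using
      (tendsto_succ_mul_norm_exp_mul_exp_sub_exp x y).const_mul (Real.exp (‖x‖ + ‖y‖)))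
  push_cast
  exact norm_exp_mul_exp_pow_sub_exp_add_le x y n

end

theorem Filter.Tendsto.mapsTo_of_eventually_mapsTo {𝕜 E : Type*} [NontriviallyNormedField 𝕜]
    [NormedAddCommGroup E] [NormedSpace 𝕜 E] {ι : Type*} {l : Filter ι} [l.NeBot]
    {T : ι → E →L[𝕜] E} {T₀ : E →L[𝕜] E}
    (hT : Tendsto T l (𝓝 T₀)) {C : Set E} (hC : IsClosed C) (h : ∀ᶠ i in l, MapsTo (T i) C C) :
    MapsTo T₀ C C := fun x hx =>
  hC.mem_of_tendsto (((ContinuousLinearMap.apply 𝕜 E x).continuous.tendsto _).comp hT)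
    (h.mono fun _ hi => hi hx)

/-- Let `C` be a closed subset of a finite-dimensional real vector space `V`, and let
`L₁, L₂` be linear operators on `V` such that `e^{s Lᵢ}` maps `C` into `C` for all `s ≥ 0`.
Then `e^{s(L₁ + L₂)}` maps `C` into `C` for all `s ≥ 0`. -/
theorem exp_sum_preserves_closed_set (V : Type*) [NormedAddCommGroup V] [NormedSpace ℝ V]
    [FiniteDimensional ℝ V] (C : Set V) (hC : IsClosed C)
    (L₁ L₂ : V →L[ℝ] V)
    (h₁ : ∀ s : ℝ, 0 ≤ s → ∀ x ∈ C, NormedSpace.exp (s • L₁) x ∈ C)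
    (h₂ : ∀ s : ℝ, 0 ≤ s → ∀ x ∈ C, NormedSpace.exp (s • L₂) x ∈ C) :
    ∀ s : ℝ, 0 ≤ s → ∀ x ∈ C, NormedSpace.exp (s • (L₁ + L₂)) x ∈ C := by
  intro s hs
  -- `V →L[ℝ] V` is a `NormOneClass` only when `V` is nontrivial.
  rcases subsingleton_or_nontrivial V with _ | _
  · intro x hx
    rwa [Subsingleton.elim (exp (s • (L₁ + L₂)) x) x]
  have h_step (n : ℕ) :
      MapsTo (exp ((n : ℝ)⁻¹ • s • L₁) * exp ((n : ℝ)⁻¹ • s • L₂)) C C := by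
    have hns : 0 ≤ (n : ℝ)⁻¹ * s := by positivity
    rw [FunLike.coe_mul_eq_comp, smul_smul, smul_smul]
    exact MapsTo.comp (h₁ _ hns) (h₂ _ hns)
  rw [smul_add]
  refine (tendsto_exp_mul_exp_pow (s • L₁) (s • L₂)).mapsTo_of_eventually_mapsTo hC
    (Eventually.of_forall fun n => ?_)
  rw [FunLike.coe_pow_eq_iterate]
  exact (h_step n).iterate n
end

section
/- A homogeneous polynomial f of degree d in n variables with nonnegative coefficients is real stable if and only if for every y in R^n the univariate polynomial t -> f(t·1 - y) has only real zeros, and by homogeneity this is equivalent to requiring it only for all y on the sphere { y in R^n : sum y_i = 0, sum y_i^2 = 1 }. -/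
/-!
A polynomial with nonnegative coefficients is positive on the positive orthant. Real stability
says that `f` is hyperbolic in every positive direction `b`, i.e. `t ↦ f(t b - y)` is real-rooted
for all real `y`, so the first equivalence is Gårding's theorem that hyperbolicity in the direction
`1` propagates to the whole positive orthant. For real `x` and the segment `c_s` from `1` to `b`,
the zeros of `t ↦ f(x + i·1 + t c_s)` never meet the real line (such a zero would be a non-real
zero of some `t ↦ f(t·1 - y)`) and stay bounded (since `f(c_s) > 0`); while they all lie in the
open lower half-plane, `|f(x + i·1 + t c_s)| ≥ f(c_s) (Im t)^d` on the upper one. Hence the set of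
`s ∈ [0,1]` for which they all lie in the lower half-plane is open and closed in `[0,1]`; it
contains `0`, so also `1`, and `t = i` gives `f(x + i(1 + b)) ≠ 0`. Every positive vector is a
positive multiple of some `1 + b` with `b > 0`.
The second equivalence is translation along `1` followed by homogeneous rescaling.
-/

open MvPolynomial Filter Topology Bornology Set
open scoped Polynomial

theorem Finsupp.prod_pow_eq_prod_map_toMultiset {σ M : Type*} [CommMonoid M] (m : σ →₀ ℕ)
    (g : σ → M) : (m.prod fun i k => g i ^ k) = (m.toMultiset.map g).prod := by
  rw [Finsupp.toMultiset_map, Finsupp.prod_toMultiset, Finsupp.prod_mapDomain_index]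
  · simp
  · simp [pow_add]

theorem exists_pos_forall_mul_lt {ι : Type*} [Finite ι] (a : ι → ℝ) {b : ι → ℝ}
    (hb : ∀ i, 0 < b i) : ∃ δ > 0, ∀ i, δ * a i < b i := by
  have hsmall : ∀ᶠ δ in 𝓝 (0 : ℝ), ∀ i, δ * a i < b i := eventually_all.mpr fun i =>
    ((continuous_id.mul continuous_const).tendsto' 0 0 (zero_mul _)).eventually_lt_const (hb i)
  exact ((eventually_nhdsWithin_of_eventually_nhds (s := Ioi 0) hsmall).and
    self_mem_nhdsWithin).exists.imp fun δ h => ⟨h.2, h.1⟩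

theorem exists_eq_add_mul_of_sphere {σ : Type*} [Fintype σ] (y : σ → ℝ) :
    ∃ (s r : ℝ) (u : σ → ℝ), (∀ i, y i = s + r * u i) ∧
      (r = 0 ∨ (∑ i, u i = 0 ∧ ∑ i, u i ^ 2 = 1)) := by
  set s := (∑ i, y i) / Fintype.card σ
  set r := √(∑ i, (y i - s) ^ 2)
  have hdev : ∑ i, (y i - s) = 0 := by
    rw [Finset.sum_sub_distrib, Finset.sum_const, Finset.card_univ, nsmul_eq_mul, sub_eq_zero]
    rcases (Fintype.card σ).eq_zero_or_pos with h | h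
    · simp [Fintype.card_eq_zero_iff.mp h]
    · simp only [s]; field_simp
  by_cases hr : r = 0
  · refine ⟨s, 0, 0, fun i => ?_, Or.inl rfl⟩
    have hsq := (Finset.sum_eq_zero_iff_of_nonneg fun i _ => sq_nonneg (y i - s)).mp
      (le_antisymm (Real.sqrt_eq_zero'.mp hr) (Finset.sum_nonneg fun i _ => sq_nonneg _)) i
      (Finset.mem_univ i)
    simpa [sub_eq_zero] using hsq
  · refine ⟨s, r, fun i => (y i - s) / r, fun i => by field_simp; ring, Or.inr ⟨?_, ?_⟩⟩
    · rw [← Finset.sum_div, hdev, zero_div]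
    · simp only [div_pow, ← Finset.sum_div]
      rw [Real.sq_sqrt (Finset.sum_nonneg fun i _ => sq_nonneg _), div_self]
      exact fun h => hr (by simp [r, h])

namespace Polynomial

theorem finsuppProd_pow_natDegree_le_and_coeff {σ R : Type*} [CommSemiring R] {L : σ → R[X]}
    (hL : ∀ i, (L i).natDegree ≤ 1) (m : σ →₀ ℕ) :
    (m.prod fun i k => L i ^ k).natDegree ≤ m.degree ∧
      (m.prod fun i k => L i ^ k).coeff m.degree = m.prod fun i k => (L i).coeff 1 ^ k := by
  set t := m.toMultiset.map L
  have hdeg : m.degree = Multiset.card t * 1 := by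
    rw [mul_one, Multiset.card_map, Finsupp.card_toMultiset]; rfl
  have hle : ∀ p ∈ t, p.natDegree ≤ 1 := by simp [t, hL]
  simp only [Finsupp.prod_pow_eq_prod_map_toMultiset, hdeg]
  refine ⟨(natDegree_multiset_prod_le _).trans ?_, ?_⟩
  · calc (t.map natDegree).sum ≤ Multiset.card (t.map natDegree) • 1 :=
          Multiset.sum_le_card_nsmul _ _ (Multiset.forall_mem_map_iff.mpr hle)
      _ = Multiset.card t * 1 := by rw [Multiset.card_map, smul_eq_mul]
  · rw [coeff_multiset_prod_of_natDegree_le _ 1 hle, Multiset.map_map]; rfl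

theorem eval_aeval_eq_eval {σ R : Type*} [CommSemiring R] (L : σ → R[X])
    (F : MvPolynomial σ R) (z : R) :
    (MvPolynomial.aeval L F).eval z = MvPolynomial.eval (fun i => (L i).eval z) F := by
  simpa using congrArg (· F) (MvPolynomial.comp_aeval (R := R) L (aeval z))

theorem norm_coeff_mul_im_pow_le_norm_eval {p : ℂ[X]} {d : ℕ} (hd : p.natDegree ≤ d)
    (hp : ∀ z : ℂ, 0 < z.im → p.eval z ≠ 0) {z : ℂ} (hz : 0 ≤ z.im) :
    ‖p.coeff d‖ * z.im ^ d ≤ ‖p.eval z‖ := by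
  rcases hd.lt_or_eq with hlt | rfl
  · simp [coeff_eq_zero_of_natDegree_lt hlt]
  have hroots : ∀ r ∈ p.roots, z.im ≤ ‖z - r‖ := fun r hr => by
    have : r.im ≤ 0 := not_lt.mp fun h => hp r h (isRoot_of_mem_roots hr)
    calc z.im ≤ (z - r).im := by rw [Complex.sub_im]; linarith
      _ ≤ ‖z - r‖ := Complex.im_le_norm _
  conv_rhs => rw [← C_leadingCoeff_mul_prod_multiset_X_sub_C
    (IsAlgClosed.card_roots_eq_natDegree (p := p))]
  rw [coeff_natDegree, eval_mul, eval_C, norm_mul, eval_multiset_prod,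
    ← normHom_apply (α := ℂ) (Multiset.prod _), map_multiset_prod, Multiset.map_map,
    Multiset.map_map, ← IsAlgClosed.card_roots_eq_natDegree, ← Multiset.prod_replicate,
    ← Multiset.map_const']
  gcongr
  exact Multiset.prod_map_le_prod_map₀ _ _ (fun _ _ => hz) fun r hr => by simpa using hroots r hr

end Polynomial

namespace MvPolynomial

@[fun_prop]
theorem _root_.Continuous.mvPolynomial_eval {X σ R : Type*} [TopologicalSpace X] [CommSemiring R]
    [TopologicalSpace R] [IsTopologicalSemiring R] {f : X → σ → R} (hf : Continuous f)
    (F : MvPolynomial σ R) : Continuous fun x => eval (f x) F :=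
  (continuous_eval F).comp hf

section Homogeneous

variable {σ R : Type*} [CommSemiring R] {F : MvPolynomial σ R} {d : ℕ}

theorem IsHomogeneous.eval_smul (hF : F.IsHomogeneous d) (c : R) (w : σ → R) :
    eval (c • w) F = c ^ d * eval w F := by
  conv_lhs => rw [F.as_sum]
  conv_rhs => rw [F.as_sum]
  simp only [map_sum, eval_monomial, Finset.mul_sum]
  refine Finset.sum_congr rfl fun m hm => ?_
  rw [hF.degree_eq_sum_deg_support hm]
  simp only [Finsupp.prod, Pi.smul_apply, smul_eq_mul, mul_pow, Finset.prod_mul_distrib,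
    Finset.prod_pow_eq_pow_sum]
  ring

theorem IsHomogeneous.natDegree_aeval_le_and_coeff (hF : F.IsHomogeneous d) {L : σ → R[X]}
    (hL : ∀ i, (L i).natDegree ≤ 1) :
    (MvPolynomial.aeval L F).natDegree ≤ d ∧
      (MvPolynomial.aeval L F).coeff d = eval (fun i => (L i).coeff 1) F := by
  conv_lhs => rw [F.as_sum]
  conv_rhs => rw [F.as_sum]
  simp only [map_sum, aeval_monomial, eval_monomial, Polynomial.finsetSum_coeff,
    Polynomial.algebraMap_eq, Polynomial.coeff_C_mul]
  have hdeg : ∀ m ∈ F.support, m.degree = d := fun m hm => by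
    rw [Finsupp.degree_eq_weight_one]; exact hF (mem_support_iff.mp hm)
  constructor
  · refine Polynomial.natDegree_sum_le_of_forall_le _ _ fun m hm => ?_
    exact (Polynomial.natDegree_C_mul_le _ _).trans
      (hdeg m hm ▸ (Polynomial.finsuppProd_pow_natDegree_le_and_coeff hL m).1)
  · refine Finset.sum_congr rfl fun m hm => ?_
    rw [← hdeg m hm, (Polynomial.finsuppProd_pow_natDegree_le_and_coeff hL m).2]

end Homogeneous

section Complex

variable {σ : Type*} {F : MvPolynomial σ ℂ} {d : ℕ}

theorem IsHomogeneous.norm_eval_mul_im_pow_le (hF : F.IsHomogeneous d) {p c : σ → ℂ}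
    (hp : ∀ z : ℂ, 0 < z.im → eval (p + z • c) F ≠ 0) {z : ℂ} (hz : 0 ≤ z.im) :
    ‖eval c F‖ * z.im ^ d ≤ ‖eval (p + z • c) F‖ := by
  set P := MvPolynomial.aeval (fun i => Polynomial.C (c i) * Polynomial.X + Polynomial.C (p i)) F
  have hP : ∀ w, P.eval w = eval (p + w • c) F := fun w => by
    simp only [P, Polynomial.eval_aeval_eq_eval]
    congr 2; ext i
    simp only [Polynomial.eval_add, Polynomial.eval_mul, Polynomial.eval_C, Polynomial.eval_X,
      Pi.add_apply, Pi.smul_apply, smul_eq_mul]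
    ring
  obtain ⟨hdeg, hcoeff⟩ := hF.natDegree_aeval_le_and_coeff fun i => Polynomial.natDegree_linear_le
  simp only [Polynomial.coeff_add, Polynomial.coeff_C_mul_X, Polynomial.coeff_C, if_true,
    one_ne_zero, if_false, add_zero] at hcoeff
  rw [← hcoeff, ← hP]
  exact Polynomial.norm_coeff_mul_im_pow_le_norm_eval hdeg (fun w hw => hP w ▸ hp w hw) hz

variable {p : σ → ℂ} {c : ℝ → σ → ℂ}

theorem IsHomogeneous.exists_norm_lt_of_eval_add_smul_eq_zero (hF : F.IsHomogeneous d)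
    (hc : Continuous c) {K : Set ℝ} (hK : IsCompact K) (hcK : ∀ s ∈ K, eval (c s) F ≠ 0) :
    ∃ r, ∀ s ∈ K, ∀ z : ℂ, eval (p + z • c s) F = 0 → ‖z‖ < r := by
  have hnear : ∀ᶠ w in 𝓝 (0 : ℂ), ∀ s ∈ K, eval (w • p + c s) F ≠ 0 :=
    hK.eventually_forall_of_forall_eventually fun s hs => by
      have hcont : Continuous fun ws : ℂ × ℝ => eval (ws.1 • p + c ws.2) F := by fun_prop
      exact hcont.continuousAt.eventually_ne (by simpa using hcK s hs)
  have hfar : ∀ᶠ z in cobounded ℂ, ∀ s ∈ K, eval (p + z • c s) F ≠ 0 := by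
    filter_upwards [tendsto_inv₀_cobounded.eventually hnear, eventually_ne_cobounded 0]
      with z hz hz0 s hs
    rw [show p + z • c s = z • (z⁻¹ • p + c s) by rw [smul_add, smul_inv_smul₀ hz0],
      hF.eval_smul]
    exact mul_ne_zero (pow_ne_zero _ hz0) (hz s hs)
  obtain ⟨r, -, hr⟩ := hasBasis_cobounded_norm.eventually_iff.mp hfar
  exact ⟨r, fun s hs z hz => not_le.mp fun h => hr h s hs hz⟩

theorem IsHomogeneous.isClosed_setOf_forall_eval_ne_zero (hF : F.IsHomogeneous d)
    (hc : Continuous c) (hcI : ∀ s ∈ Icc (0 : ℝ) 1, eval (c s) F ≠ 0) :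
    IsClosed {s ∈ Icc (0 : ℝ) 1 | ∀ z : ℂ, 0 < z.im → eval (p + z • c s) F ≠ 0} := by
  have : {s ∈ Icc (0 : ℝ) 1 | ∀ z : ℂ, 0 < z.im → eval (p + z • c s) F ≠ 0} =
      Icc 0 1 ∩ ⋂ z ∈ {z : ℂ | 0 < z.im},
        {s | ‖eval (c s) F‖ * z.im ^ d ≤ ‖eval (p + z • c s) F‖} := by
    ext s
    simp only [mem_ofPred_eq, mem_inter_iff, mem_iInter]
    refine and_congr_right fun hs =>
      ⟨fun h z hz => hF.norm_eval_mul_im_pow_le h (le_of_lt hz), fun h z hz h0 => ?_⟩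
    have := h z hz
    rw [h0, norm_zero] at this
    exact (mul_pos (norm_pos_iff.mpr (hcI s hs)) (pow_pos hz d)).not_ge this
  rw [this]
  exact isClosed_Icc.inter (isClosed_biInter fun z _ => isClosed_le (by fun_prop) (by fun_prop))

theorem IsHomogeneous.isClosed_setOf_exists_eval_eq_zero (hF : F.IsHomogeneous d)
    (hc : Continuous c) (hcI : ∀ s ∈ Icc (0 : ℝ) 1, eval (c s) F ≠ 0)
    (hreal : ∀ s ∈ Icc (0 : ℝ) 1, ∀ t : ℝ, eval (p + (t : ℂ) • c s) F ≠ 0) :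
    IsClosed {s ∈ Icc (0 : ℝ) 1 | ∃ z : ℂ, 0 < z.im ∧ eval (p + z • c s) F = 0} := by
  obtain ⟨r, hr⟩ := hF.exists_norm_lt_of_eval_add_smul_eq_zero hc isCompact_Icc hcI
  set Z := {q : ℝ × ℂ | q.1 ∈ Icc 0 1 ∧ 0 ≤ q.2.im} ∩
    {q : ℝ × ℂ | ‖q.2‖ ≤ r ∧ eval (p + q.2 • c q.1) F = 0}
  have hZ : IsCompact Z := by
    refine ((isCompact_Icc (a := (0 : ℝ)) (b := 1)).prod
      (isCompact_closedBall 0 r)).of_isClosed_subset ?_ ?_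
    · have hroot : Continuous fun q : ℝ × ℂ => eval (p + q.2 • c q.1) F := by fun_prop
      exact ((isClosed_Icc.preimage continuous_fst).inter
        (isClosed_le continuous_const (Complex.continuous_im.comp continuous_snd))).inter
        ((isClosed_le (continuous_norm.comp continuous_snd) continuous_const).inter
          (isClosed_eq hroot continuous_const))
    · rintro ⟨s, z⟩ ⟨⟨hs, -⟩, hz, -⟩
      exact ⟨hs, mem_closedBall_zero_iff.mpr hz⟩
  convert (hZ.image continuous_fst).isClosed using 1
  ext s
  constructor
  · rintro ⟨hs, z, hz, h0⟩
    exact ⟨(s, z), ⟨⟨hs, hz.le⟩, (hr s hs z h0).le, h0⟩, rfl⟩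
  · rintro ⟨⟨s, z⟩, ⟨⟨hs, hz⟩, -, h0⟩, rfl⟩
    refine ⟨hs, z, hz.lt_of_ne fun him => hreal s hs z.re ?_, h0⟩
    rwa [show (z.re : ℂ) = z from Complex.ext rfl (by simp [him])]

theorem IsHomogeneous.eval_add_smul_ne_zero_of_path (hF : F.IsHomogeneous d)
    (hc : Continuous c) (hcI : ∀ s ∈ Icc (0 : ℝ) 1, eval (c s) F ≠ 0)
    (hreal : ∀ s ∈ Icc (0 : ℝ) 1, ∀ t : ℝ, eval (p + (t : ℂ) • c s) F ≠ 0)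
    (h0 : ∀ z : ℂ, 0 < z.im → eval (p + z • c 0) F ≠ 0) {z : ℂ} (hz : 0 < z.im) :
    eval (p + z • c 1) F ≠ 0 := by
  set G := {s ∈ Icc (0 : ℝ) 1 | ∀ z : ℂ, 0 < z.im → eval (p + z • c s) F ≠ 0}
  set B := {s ∈ Icc (0 : ℝ) 1 | ∃ z : ℂ, 0 < z.im ∧ eval (p + z • c s) F = 0}
  have hcover : Icc (0 : ℝ) 1 ⊆ G ∪ B := fun s hs => by
    by_cases h : ∀ z : ℂ, 0 < z.im → eval (p + z • c s) F ≠ 0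
    · exact Or.inl ⟨hs, h⟩
    · push Not at h
      exact Or.inr ⟨hs, h⟩
  have hdisj : Icc (0 : ℝ) 1 ∩ (G ∩ B) = ∅ := by
    ext s
    simp only [mem_inter_iff, mem_empty_iff_false, iff_false]
    rintro ⟨-, ⟨-, hgood⟩, -, w, hw, hw0⟩
    exact hgood w hw hw0
  rcases isPreconnected_iff_subset_of_disjoint_closed.mp isPreconnected_Icc G B
    (hF.isClosed_setOf_forall_eval_ne_zero hc hcI)
    (hF.isClosed_setOf_exists_eval_eq_zero hc hcI hreal) hcover hdisj with hgood | hbad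
  · exact (hgood (right_mem_Icc.mpr zero_le_one)).2 z hz
  · obtain ⟨-, w, hw, hw0⟩ := hbad (left_mem_Icc.mpr zero_le_one)
    exact absurd hw0 (h0 w hw)

end Complex

section Real

variable {σ : Type*} {f : MvPolynomial σ ℝ}

theorem eval_pos_of_coeff_nonneg (hf0 : f ≠ 0) (hnn : ∀ m, 0 ≤ f.coeff m) {b : σ → ℝ}
    (hb : ∀ i, 0 < b i) : 0 < eval b f := by
  obtain ⟨m, hm⟩ := ne_zero_iff.mp hf0
  rw [eval_eq]
  refine Finset.sum_pos' (fun m _ => mul_nonneg (hnn m) ?_) ⟨m, mem_support_iff.mpr hm, ?_⟩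
  · exact Finset.prod_nonneg fun i _ => pow_nonneg (hb i).le _
  · exact mul_pos ((hnn m).lt_of_ne' hm) (Finset.prod_pos fun i _ => pow_pos (hb i) _)

theorem eval_map_ofReal (f : MvPolynomial σ ℝ) (x : σ → ℝ) :
    eval (fun i => (x i : ℂ)) (f.map (algebraMap ℝ ℂ)) = eval x f :=
  (map_eval (algebraMap ℝ ℂ) x f).symm

theorem conj_eval_map_ofReal (f : MvPolynomial σ ℝ) (w : σ → ℂ) :
    starRingEnd ℂ (eval w (f.map (algebraMap ℝ ℂ))) =
      eval (fun i => starRingEnd ℂ (w i)) (f.map (algebraMap ℝ ℂ)) := by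
  rw [map_eval, map_map,
    show (starRingEnd ℂ).comp (algebraMap ℝ ℂ) = algebraMap ℝ ℂ from RingHom.ext Complex.conj_ofReal]
  rfl

def IsRealStable (f : MvPolynomial σ ℝ) : Prop :=
  ∀ w : σ → ℂ, (∀ j, 0 < (w j).im) → eval w (f.map (algebraMap ℝ ℂ)) ≠ 0

def IsHyperbolic (f : MvPolynomial σ ℝ) (e : σ → ℝ) : Prop :=
  ∀ (y : σ → ℝ) (z : ℂ), eval (fun i => z * e i - y i) (f.map (algebraMap ℝ ℂ)) = 0 → z.im = 0

theorem isHyperbolic_iff_forall_im_pos {e : σ → ℝ} :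
    IsHyperbolic f e ↔ ∀ (y : σ → ℝ) (z : ℂ), 0 < z.im →
      eval (fun i => z * e i - y i) (f.map (algebraMap ℝ ℂ)) ≠ 0 := by
  refine ⟨fun h y z hz h0 => hz.ne' (h y z h0), fun h y z h0 => ?_⟩
  rcases lt_trichotomy z.im 0 with hneg | hzero | hpos
  · have hconj := conj_eval_map_ofReal f (fun i => z * e i - y i)
    simp only [h0, map_zero, map_sub, map_mul, Complex.conj_ofReal] at hconj
    exact absurd hconj.symm (h y (starRingEnd ℂ z) (by simpa using hneg))
  · exact hzero
  · exact absurd h0 (h y z hpos)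

theorem isHyperbolic_one_iff :
    IsHyperbolic f 1 ↔ ∀ (y : σ → ℝ) (z : ℂ),
      eval (fun i => z - y i) (f.map (algebraMap ℝ ℂ)) = 0 → z.im = 0 := by
  simp [IsHyperbolic]

theorem isRealStable_iff_forall_isHyperbolic :
    IsRealStable f ↔ ∀ b : σ → ℝ, (∀ i, 0 < b i) → IsHyperbolic f b := by
  simp only [isHyperbolic_iff_forall_im_pos]
  refine ⟨fun h b hb y z hz => h _ fun i => ?_, fun h w hw => ?_⟩
  · simpa using mul_pos hz (hb i)
  · have hw' : (fun i => Complex.I * (w i).im - ((-(w i).re : ℝ) : ℂ)) = w := by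
      funext i; apply Complex.ext <;> simp
    simpa only [hw'] using h (fun i => (w i).im) hw (fun i => -(w i).re) Complex.I (by simp)

theorem IsHyperbolic.eval_add_mul_ne_zero {d : ℕ} (hf : f.IsHomogeneous d) (hf0 : f ≠ 0)
    (hnn : ∀ m, 0 ≤ f.coeff m) {a c : σ → ℝ} (ha : ∀ i, 0 < a i) (hc : ∀ i, 0 < c i)
    (h : IsHyperbolic f a) (x : σ → ℝ) {z : ℂ} (hz : 0 < z.im) :
    eval (fun i => x i + Complex.I * a i + z * c i) (f.map (algebraMap ℝ ℂ)) ≠ 0 := by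
  rw [isHyperbolic_iff_forall_im_pos] at h
  have hpath := (hf.map (algebraMap ℝ ℂ)).eval_add_smul_ne_zero_of_path
    (p := fun i => x i + Complex.I * a i)
    (c := fun s i => (((1 - s) * a i + s * c i : ℝ) : ℂ)) (by fun_prop) ?_ ?_ ?_ hz
  · convert hpath using 3
    funext i
    simp
  · intro s hs
    rw [eval_map_ofReal, ne_eq, Complex.ofReal_eq_zero]
    refine (eval_pos_of_coeff_nonneg hf0 hnn fun i => ?_).ne'
    rcases hs.1.eq_or_lt with rfl | hs0
    · simpa using ha i
    · exact add_pos_of_nonneg_of_pos (mul_nonneg (sub_nonneg.mpr hs.2) (ha i).le)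
        (mul_pos hs0 (hc i))
  · intro s hs t
    convert h (fun i => -(x i + t * ((1 - s) * a i + s * c i))) Complex.I (by simp) using 3
    funext i
    simp only [Pi.add_apply, Pi.smul_apply, smul_eq_mul]
    push_cast
    ring
  · intro w hw
    convert h (fun i => -x i) (w + Complex.I) (by simpa using hw.trans (lt_add_one _)) using 3
    funext i
    simp only [Pi.add_apply, Pi.smul_apply, smul_eq_mul]
    push_cast
    ring

theorem IsHyperbolic.isHyperbolic_of_pos [Finite σ] {d : ℕ} (hf : f.IsHomogeneous d)
    (hf0 : f ≠ 0) (hnn : ∀ m, 0 ≤ f.coeff m) {a b : σ → ℝ} (ha : ∀ i, 0 < a i)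
    (hb : ∀ i, 0 < b i) (h : IsHyperbolic f a) : IsHyperbolic f b := by
  rw [isHyperbolic_iff_forall_im_pos]
  intro y z hz
  -- `b = δ a + b'` with `b' > 0`, so `z b - y` is a real multiple of some `x + i a + w b'`.
  obtain ⟨δ, hδ, hδb⟩ := exists_pos_forall_mul_lt a hb
  have hne := h.eval_add_mul_ne_zero hf hf0 hnn ha (c := fun i => b i - δ * a i)
    (fun i => sub_pos.mpr (hδb i)) (fun i => (z.re * b i - y i) / (z.im * δ))
    (z := Complex.I / δ) (by simpa using hδ)
  have hscale : (fun i => z * b i - y i) = ((z.im * δ : ℝ) : ℂ) •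
      fun i => (((z.re * b i - y i) / (z.im * δ) : ℝ) : ℂ) + Complex.I * a i +
        Complex.I / δ * ((b i - δ * a i : ℝ) : ℂ) := by
    funext i
    have him : (z.im : ℂ) ≠ 0 := by exact_mod_cast hz.ne'
    have hδ' : (δ : ℂ) ≠ 0 := by exact_mod_cast hδ.ne'
    simp only [Pi.smul_apply, smul_eq_mul]
    push_cast
    field_simp
    conv_lhs => rw [← Complex.re_add_im z]
    ring
  rw [hscale, (hf.map _).eval_smul]
  exact mul_ne_zero (pow_ne_zero _ (by exact_mod_cast (mul_pos hz hδ).ne')) hne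

theorem isHyperbolic_one_iff_sphere [Fintype σ] {d : ℕ} (hf : f.IsHomogeneous d)
    (h1 : eval 1 f ≠ 0) :
    IsHyperbolic f 1 ↔ ∀ y : σ → ℝ, ∑ i, y i = 0 → ∑ i, y i ^ 2 = 1 → ∀ z : ℂ,
      eval (fun i => z - y i) (f.map (algebraMap ℝ ℂ)) = 0 → z.im = 0 := by
  rw [isHyperbolic_one_iff]
  refine ⟨fun h y _ _ => h y, fun h y z h0 => ?_⟩
  obtain ⟨s, r, u, hy, hsph⟩ := exists_eq_add_mul_of_sphere y
  rcases eq_or_ne r 0 with hr | hr0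
  · have hconst : (fun i => z - (y i : ℂ)) = (z - s) • fun _ => ((1 : ℝ) : ℂ) := by
      funext i; simp [hy i, hr]
    rw [hconst, (hf.map _).eval_smul, eval_map_ofReal] at h0
    have := (pow_eq_zero_iff'.mp ((mul_eq_zero.mp h0).resolve_right (by exact_mod_cast h1))).1
    rw [sub_eq_zero.mp this, Complex.ofReal_im]
  · obtain ⟨hu, hu2⟩ := hsph.resolve_left hr0
    have hscale : (fun i => z - (y i : ℂ)) = (r : ℂ) • fun i => (z - s) / r - u i := by
      funext i
      have : (r : ℂ) ≠ 0 := by exact_mod_cast hr0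
      simp only [hy i, Pi.smul_apply, smul_eq_mul]
      push_cast
      field_simp
      ring
    rw [hscale, (hf.map _).eval_smul] at h0
    have := h u hu hu2 _ ((mul_eq_zero.mp h0).resolve_left (pow_ne_zero _ (by exact_mod_cast hr0)))
    rw [Complex.div_ofReal_im, div_eq_zero_iff, Complex.sub_im, Complex.ofReal_im, sub_zero] at this
    exact this.resolve_right hr0

end Real

end MvPolynomial

/-- A nonzero homogeneous polynomial `f` of degree `d` in `n` variables with nonnegative
coefficients is real stable iff for every `y ∈ ℝⁿ` the univariate polynomial
`t ↦ f(t·1 - y)` has only real zeros; by homogeneity this is further equivalent to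
requiring it only for `y` on the sphere `{ y : ∑ yᵢ = 0, ∑ yᵢ² = 1 }`. -/
theorem real_stable_iff_real_rooted_restrictions (n d : ℕ) (f : MvPolynomial (Fin n) ℝ)
    (hf : f.IsHomogeneous d) (hf0 : f ≠ 0) (hnn : ∀ m, 0 ≤ f.coeff m) :
    ((∀ w : Fin n → ℂ, (∀ j, 0 < (w j).im) →
        MvPolynomial.eval w (MvPolynomial.map (algebraMap ℝ ℂ) f) ≠ 0)
      ↔ (∀ y : Fin n → ℝ, ∀ z : ℂ,
          MvPolynomial.eval (fun i => z - (y i : ℂ)) (MvPolynomial.map (algebraMap ℝ ℂ) f) = 0 →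
            z.im = 0)) ∧
    ((∀ y : Fin n → ℝ, ∀ z : ℂ,
        MvPolynomial.eval (fun i => z - (y i : ℂ)) (MvPolynomial.map (algebraMap ℝ ℂ) f) = 0 →
          z.im = 0)
      ↔ (∀ y : Fin n → ℝ, (∑ i, y i) = 0 → (∑ i, (y i) ^ 2) = 1 → ∀ z : ℂ,
          MvPolynomial.eval (fun i => z - (y i : ℂ)) (MvPolynomial.map (algebraMap ℝ ℂ) f) = 0 →
            z.im = 0)) := by
  have hpos : ∀ b : Fin n → ℝ, (∀ i, 0 < b i) → 0 < eval b f :=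
    fun b hb => eval_pos_of_coeff_nonneg hf0 hnn hb
  rw [← isHyperbolic_one_iff]
  refine ⟨isRealStable_iff_forall_isHyperbolic.trans ⟨fun h => h 1 fun _ => one_pos, ?_⟩,
    isHyperbolic_one_iff_sphere hf (hpos 1 fun _ => one_pos).ne'⟩
  exact fun h b hb => h.isHyperbolic_of_pos hf hf0 hnn (fun _ => one_pos) hb
end

section
/- Let q(t) = at^2 + bt + c be a real quadratic arising as q(t) = f(t·1 - y) for a quadratic form f(w) = w M w^T /2 with symmetric matrix M, where y in R^m is not parallel to 1 = (1,...,1). If M has signature (+,-,...,-) (one positive, m-1 negative eigenvalues) and 1·M·1^T > 0, then q has two real and distinct zeros. -/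
/-!
In an orthonormal eigenbasis of `M` the form `x ⬝ᵥ M *ᵥ x` is `∑ λᵢ xᵢ²` with `λᵢ < 0` for
`i ≠ i₀`, so it is negative definite on the hyperplane orthogonal to the eigenvector `v₀`.
As `1 ⬝ᵥ M *ᵥ 1 > 0`, the vector `1` is not in that hyperplane, so the line `t • 1 - y` crosses it
at some `t₀`, in a nonzero vector because `y` is not parallel to `1`. Thus `q(t₀) < 0`, while the
leading coefficient of `q` is `1 ⬝ᵥ M *ᵥ 1 > 0`, so `q` has two distinct real roots.
-/

open Matrix

theorem exists_ne_quadratic_eq_zero_of_pos_of_neg {a b c x₀ : ℝ} (ha : 0 < a)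
    (hx₀ : a * (x₀ * x₀) + b * x₀ + c < 0) :
    ∃ x₁ x₂ : ℝ, x₁ ≠ x₂ ∧ a * (x₁ * x₁) + b * x₁ + c = 0 ∧ a * (x₂ * x₂) + b * x₂ + c = 0 := by
  have hd : 0 < discrim a b c := by
    have : 4 * a * (a * (x₀ * x₀) + b * x₀ + c) = (2 * a * x₀ + b) ^ 2 - discrim a b c := by
      rw [discrim]; ring
    nlinarith [sq_nonneg (2 * a * x₀ + b), mul_neg_of_pos_of_neg ha hx₀]
  have hs : discrim a b c = √(discrim a b c) * √(discrim a b c) :=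
    (Real.mul_self_sqrt hd.le).symm
  have hs0 : √(discrim a b c) ≠ 0 := (Real.sqrt_pos.mpr hd).ne'
  refine ⟨(-b + √(discrim a b c)) / (2 * a), (-b - √(discrim a b c)) / (2 * a), ?_,
    (quadratic_eq_zero_iff ha.ne' hs _).mpr (Or.inl rfl),
    (quadratic_eq_zero_iff ha.ne' hs _).mpr (Or.inr rfl)⟩
  rw [Ne, div_left_inj' (mul_ne_zero two_ne_zero ha.ne')]
  intro h
  exact hs0 (by linarith)

namespace Matrix

theorem dotProduct_mulVec_smul_sub {n R : Type*} [Fintype n] [CommRing R]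
    (M : Matrix n n R) (u y : n → R) (t : R) :
    (t • u - y) ⬝ᵥ M *ᵥ (t • u - y) =
      u ⬝ᵥ M *ᵥ u * (t * t) + -(u ⬝ᵥ M *ᵥ y + y ⬝ᵥ M *ᵥ u) * t + y ⬝ᵥ M *ᵥ y := by
  simp only [mulVec_sub, mulVec_smul, dotProduct_sub, sub_dotProduct, smul_dotProduct,
    dotProduct_smul, smul_eq_mul]
  ring

variable {n : Type*} [Fintype n] [DecidableEq n] {M : Matrix n n ℝ}

theorem IsHermitian.dotProduct_mulVec_eq_sum_eigenvalues_mul_sq (hM : M.IsHermitian)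
    (x : n → ℝ) :
    x ⬝ᵥ M *ᵥ x = ∑ i, hM.eigenvalues i * (⇑(hM.eigenvectorBasis i) ⬝ᵥ x) ^ 2 := by
  set U : Matrix n n ℝ := ↑hM.eigenvectorUnitary
  have hcoord : star U *ᵥ x = fun i => ⇑(hM.eigenvectorBasis i) ⬝ᵥ x := rfl
  have hswap : ∀ z, x ⬝ᵥ U *ᵥ z = star U *ᵥ x ⬝ᵥ z := fun z => by
    rw [dotProduct_mulVec, ← mulVec_transpose]; rfl
  conv_lhs => rw [hM.spectral_theorem, Unitary.conjStarAlgAut_apply, ← mulVec_mulVec,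
    ← mulVec_mulVec, hswap, hcoord]
  simp [dotProduct, mulVec_diagonal, sq, mul_left_comm]

theorem IsHermitian.eq_zero_of_forall_eigenvectorBasis_dotProduct_eq_zero (hM : M.IsHermitian)
    {x : n → ℝ} (hx : ∀ i, ⇑(hM.eigenvectorBasis i) ⬝ᵥ x = 0) : x = 0 := by
  set U : Matrix n n ℝ := ↑hM.eigenvectorUnitary
  have hcoord : star U *ᵥ x = 0 := funext hx
  rw [← one_mulVec x, ← Unitary.coe_mul_star_self hM.eigenvectorUnitary, Unitary.coe_star,
    ← mulVec_mulVec, hcoord, mulVec_zero]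

theorem IsHermitian.dotProduct_mulVec_neg_of_eigenvectorBasis_dotProduct_eq_zero
    (hM : M.IsHermitian) {i₀ : n} (hneg : ∀ i, i ≠ i₀ → hM.eigenvalues i < 0) {x : n → ℝ}
    (hx₀ : ⇑(hM.eigenvectorBasis i₀) ⬝ᵥ x = 0) (hx : x ≠ 0) :
    x ⬝ᵥ M *ᵥ x < 0 := by
  obtain ⟨j, hj⟩ : ∃ j, ⇑(hM.eigenvectorBasis j) ⬝ᵥ x ≠ 0 := by
    by_contra! h
    exact hx (hM.eq_zero_of_forall_eigenvectorBasis_dotProduct_eq_zero h)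
  have hji₀ : j ≠ i₀ := by rintro rfl; exact hj hx₀
  rw [hM.dotProduct_mulVec_eq_sum_eigenvalues_mul_sq]
  refine Finset.sum_neg' (fun i _ => ?_) ⟨j, Finset.mem_univ j, ?_⟩
  · rcases eq_or_ne i i₀ with rfl | hi
    · simp [hx₀]
    · exact mul_nonpos_of_nonpos_of_nonneg (hneg i hi).le (sq_nonneg _)
  · exact mul_neg_of_neg_of_pos (hneg j hji₀) (by positivity)

end Matrix

/-- Let `f(w) = w M wᵀ / 2` be a quadratic form with real symmetric matrix `M` of Lorentzian
signature `(+,-,…,-)` (one positive and `m-1` negative eigenvalues), and suppose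
`1·M·1ᵀ > 0`. Then for every `y ∈ ℝᵐ` not parallel to `1 = (1,…,1)`, the real quadratic
`q(t) = f(t·1 - y)` has two real and distinct zeros. -/
theorem lorentzian_quadratic_two_distinct_roots (m : ℕ)
    (M : Matrix (Fin m) (Fin m) ℝ) (hM : M.IsHermitian)
    (hsig : ∃ i₀ : Fin m, 0 < hM.eigenvalues i₀ ∧ ∀ i, i ≠ i₀ → hM.eigenvalues i < 0)
    (hpos : 0 < dotProduct (fun _ => (1 : ℝ)) (M *ᵥ fun _ => (1 : ℝ)))
    (y : Fin m → ℝ) (hy : ∀ c : ℝ, y ≠ fun _ => c) :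
    ∃ t₁ t₂ : ℝ, t₁ ≠ t₂ ∧
      dotProduct (fun i => t₁ - y i) (M *ᵥ fun i => t₁ - y i) / 2 = 0 ∧
      dotProduct (fun i => t₂ - y i) (M *ᵥ fun i => t₂ - y i) / 2 = 0 := by
  obtain ⟨i₀, -, hneg⟩ := hsig
  set e : Fin m → ℝ := fun _ => 1
  set v : Fin m → ℝ := ⇑(hM.eigenvectorBasis i₀)
  have hline : ∀ t : ℝ, (fun i => t - y i) = t • e - y := fun t => by ext; simp [e]
  have he : e ≠ 0 := by rintro he; simp [he] at hpos
  have hve : v ⬝ᵥ e ≠ 0 := fun h =>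
    hpos.not_gt (hM.dotProduct_mulVec_neg_of_eigenvectorBasis_dotProduct_eq_zero hneg h he)
  set t₀ := v ⬝ᵥ y / v ⬝ᵥ e
  have hneg₀ : (t₀ • e - y) ⬝ᵥ M *ᵥ (t₀ • e - y) < 0 := by
    refine hM.dotProduct_mulVec_neg_of_eigenvectorBasis_dotProduct_eq_zero hneg ?_
      fun h => hy t₀ ?_
    · rw [dotProduct_sub, dotProduct_smul, smul_eq_mul, div_mul_cancel₀ _ hve, sub_self]
    · rw [← hline] at h
      exact funext fun i => (sub_eq_zero.mp (congrFun h i)).symm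
  rw [dotProduct_mulVec_smul_sub] at hneg₀
  obtain ⟨t₁, t₂, hne, h₁, h₂⟩ := exists_ne_quadratic_eq_zero_of_pos_of_neg hpos hneg₀
  refine ⟨t₁, t₂, hne, ?_, ?_⟩ <;>
    simp only [hline, dotProduct_mulVec_smul_sub, h₁, h₂, zero_div]
end
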